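/- arXiv:2501.08830 — 2 statements merged into one kernel-verified Lean document; each statement's English description precedes it below -/
import Mathlib

section
/- Given a cube of integers C = (a,b,c,d,e,f,g,h), define the three binary quadratic forms Q₁(x,y) = -det(Ux + Dy), Q₂(x,y) = -det(Lx + Ry), Q₃(x,y) = -det(Fx + By), where U = (a,e;b,f), D = (c,g;d,h), L = (a,c;e,g), R = (b,d;f,h), F = (a,b;c,d), B = (e,f;g,h). Then the discriminants of Q₁, Q₂, Q₃ are all equal. -/
/-- The binary quadratic form `-det (x • M + y • N)` associated to a pair of slicings
of a Bhargava cube. -/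
def cubeForm (M N : Matrix (Fin 2) (Fin 2) ℤ) (x y : ℤ) : ℤ :=
  -Matrix.det (x • M + y • N)

/-- The discriminant of a binary quadratic form given as a function. -/
def disc2 (Q : ℤ → ℤ → ℤ) : ℤ :=
  (Q 1 1 - Q 1 0 - Q 0 1)^2 - 4 * Q 1 0 * Q 0 1

theorem bhargava_cube_discriminants (a b c d e f g h : ℤ) :
    disc2 (cubeForm !![a, e; b, f] !![c, g; d, h])
      = disc2 (cubeForm !![a, c; e, g] !![b, d; f, h]) ∧
    disc2 (cubeForm !![a, c; e, g] !![b, d; f, h])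
      = disc2 (cubeForm !![a, b; c, d] !![e, f; g, h]) := by
  constructor <;> · simp [disc2, cubeForm, Matrix.det_fin_two_of]; ring
end

section
/- Let f = (a,b,c) be an indefinite form with discriminant Δ = b² - 4ac > 0 not a perfect square. If (t,u) is an integer solution of t² - Δu² = 4, then the matrix M = ((t - bu)/2, -cu; au, (t + bu)/2) has integer entries, determinant 1, and fixes f under the change-of-variables action. -/
theorem pell_solution_gives_automorphism (a b c t u : ℤ)
    (hΔ : 0 < b^2 - 4*a*c) (hns : ¬ IsSquare (b^2 - 4*a*c))
    (hpell : t^2 - (b^2 - 4*a*c) * u^2 = 4) :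
    ∃ p s : ℤ,
      2 * p = t - b * u ∧ 2 * s = t + b * u ∧
      p * s - (-(c*u)) * (a*u) = 1 ∧
      a*p^2 + b*p*(a*u) + c*(a*u)^2 = a ∧
      2*a*p*(-(c*u)) + b*(p*s + (-(c*u))*(a*u)) + 2*c*(a*u)*s = b ∧
      a*(-(c*u))^2 + b*(-(c*u))*s + c*s^2 = c := by
  have hprod : (t - b*u) * (t + b*u) = 4 - 4*a*c*u^2 := by linear_combination hpell
  have hev : Even (t - b*u) := by
    have hevp : Even ((t - b*u) * (t + b*u)) := ⟨2 - 2*a*c*u^2, by linear_combination hprod⟩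
    rcases Int.even_mul.mp hevp with h | h
    · exact h
    · obtain ⟨k, hk⟩ := h
      exact ⟨k - b*u, by linarith⟩
  obtain ⟨p, hp⟩ := hev
  have ht : t = 2*p + b*u := by linarith
  have h4 : 4 * (p^2 + p*b*u + a*c*u^2) = 4 := by
    linear_combination hpell - (t + 2*p + b*u) * ht
  have hunit : p^2 + p*b*u + a*c*u^2 = 1 := by linarith
  refine ⟨p, p + b*u, by linarith, by linarith, ?_, ?_, ?_, ?_⟩
  · linear_combination hunit
  · linear_combination a * hunit
  · linear_combination b * hunit
  · linear_combination c * hunit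
end
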